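/- arXiv:math/0210422 — 5 statements merged into one kernel-verified Lean document; each statement's English description precedes it below -/
import Mathlib

section
/- The recombinator R_α is globally Lipschitz on the space of finite signed measures with the total variation norm, with Lipschitz constant at most 3: ‖R_α(ω) − R_α(ω')‖ ≤ 3‖ω − ω'‖ for all finite signed measures ω, ω'. -/
open Finset

namespace Recombination

variable {n : ℕ} (X : Fin (n + 1) → Type*) [∀ i, Fintype (X i)] [∀ i, DecidableEq (X i)]

/-- (Signed) measures on the finite product space `X = X₀ × ⋯ × Xₙ`,
identified with their density functions. -/
abbrev Meas := (∀ i, X i) → ℝ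

/-- Total variation norm of a measure. -/
noncomputable def tv (ω : Meas X) : ℝ := ∑ x, |ω x|

/-- Total mass of a measure. -/
noncomputable def mass (ω : Meas X) : ℝ := ∑ x, ω x

/-- Positivity of a measure. -/
def Pos (ω : Meas X) : Prop := ∀ x, 0 ≤ ω x

/-- Marginal (pushforward under the coordinate projection onto the sites
satisfying `p`) of a measure. -/
noncomputable def marg (p : Fin (n + 1) → Prop) [DecidablePred p] (ω : Meas X) :
    (∀ i : {i // p i}, X i.1) → ℝ :=
  fun y => ∑ x : ∀ i, X i, if (∀ i : {i // p i}, x i.1 = y i) then ω x else 0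

/-- Product measure of a measure on the leading block (sites satisfying `p`)
and a measure on the trailing block. -/
noncomputable def prodM (p : Fin (n + 1) → Prop) [DecidablePred p]
    (f : (∀ i : {i // p i}, X i.1) → ℝ) (g : (∀ i : {i // ¬ p i}, X i.1) → ℝ) :
    Meas X :=
  fun x => f (fun i => x i.1) * g (fun i => x i.1)

open Classical in
/-- The elementary recombinator at link `α` (the link between sites `α` and `α+1`):
`R_α(ω) = ((π_{<α}.ω) ⊗ (π_{>α}.ω))/‖ω‖` for `ω ≠ 0`, and `R_α(0) = 0`. -/
noncomputable def R (α : Fin n) (ω : Meas X) : Meas X :=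
  if ω = 0 then 0 else
    (tv X ω)⁻¹ • prodM X (fun i => i.val ≤ α.val)
      (marg X (fun i => i.val ≤ α.val) ω) (marg X (fun i => ¬ i.val ≤ α.val) ω)

/-- The composite recombinator `R_G = ∏_{α ∈ G} R_α`. -/
noncomputable def RG (G : Finset (Fin n)) (ω : Meas X) : Meas X :=
  (G.sort (· ≤ ·)).foldr (fun α ν => R X α ν) ω

/-- The coefficient functions `a_G(t)` of the single-crossover model. -/
noncomputable def coeffA (ρ : Fin n → ℝ) (G : Finset (Fin n)) (t : ℝ) : ℝ :=
  (∏ α ∈ Gᶜ, Real.exp (-(ρ α * t))) * ∏ β ∈ G, (1 - Real.exp (-(ρ β * t)))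

/-- The coefficient functions `b_K(t) = exp(−t ∑_{α∈L∖K} ρ_α)`. -/
noncomputable def coeffB (ρ : Fin n → ℝ) (K : Finset (Fin n)) (t : ℝ) : ℝ :=
  Real.exp (-(∑ α ∈ Kᶜ, ρ α) * t)

/-- The linkage-disequilibrium operators `T_G = ∑_{H ⊇ G} (−1)^{|H∖G|} R_H`. -/
noncomputable def T (G : Finset (Fin n)) (ω : Meas X) : Meas X :=
  ∑ H ∈ (Finset.univ : Finset (Fin n)).powerset.filter (fun H => G ⊆ H),
    ((-1 : ℝ) ^ (H \ G).card) • RG X H ω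

/-- The solution `ω_t = ∑_{G⊆L} a_G(t) R_G(ω₀)` of the recombination equation. -/
noncomputable def sol (ρ : Fin n → ℝ) (ω₀ : Meas X) (t : ℝ) : Meas X :=
  ∑ G ∈ (Finset.univ : Finset (Fin n)).powerset, coeffA ρ G t • RG X G ω₀

/-- The one-site marginal at site `i`. -/
noncomputable def marg1 (i : Fin (n + 1)) (ω : Meas X) (y : X i) : ℝ :=
  ∑ x : ∀ j, X j, if x i = y then ω x else 0

lemma tv_nonneg' (ω : Meas X) : 0 ≤ tv X ω :=
  Finset.sum_nonneg fun _ _ => abs_nonneg _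

lemma tv_smul' (c : ℝ) (ω : Meas X) : tv X (c • ω) = |c| * tv X ω := by
  simp [tv, abs_mul, Finset.mul_sum]

lemma tv_add_le' (ω ν : Meas X) : tv X (ω + ν) ≤ tv X ω + tv X ν := by
  rw [tv, tv, tv, ← Finset.sum_add_distrib]
  exact Finset.sum_le_sum fun x _ => abs_add_le _ _

lemma tv_neg' (ω : Meas X) : tv X (-ω) = tv X ω := by simp [tv]

lemma tv_sub_comm' (ω ν : Meas X) : tv X (ω - ν) = tv X (ν - ω) := by
  rw [← tv_neg', neg_sub]

lemma tv_pos' (ω : Meas X) (h : ω ≠ 0) : 0 < tv X ω := by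
  obtain ⟨x, hx⟩ := Function.ne_iff.1 h
  exact Finset.sum_pos' (fun _ _ => abs_nonneg _)
    ⟨x, Finset.mem_univ x, abs_pos.2 (by simpa using hx)⟩

lemma tv_sub_tv_le' (ω ν : Meas X) : tv X ω - tv X ν ≤ tv X (ω - ν) := by
  have h : tv X ω ≤ tv X (ω - ν) + tv X ν := by
    have := tv_add_le' X (ω - ν) ν
    simpa using this
  linarith

lemma marg_sub' (p : Fin (n + 1) → Prop) [DecidablePred p] (ω ω' : Meas X) :
    marg X p (ω - ω') = marg X p ω - marg X p ω' := by
  funext y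
  simp only [marg, Pi.sub_apply]
  rw [← Finset.sum_sub_distrib]
  congr 1; funext x; split <;> simp

set_option maxHeartbeats 1000000 in
lemma marg_tv_le' (p : Fin (n + 1) → Prop) [DecidablePred p] (ω : Meas X) :
    ∑ y, |marg X p ω y| ≤ tv X ω := by
  have key : ∀ x : ∀ i, X i,
      (∑ y : ∀ i : {i // p i}, X i.1,
        (if (∀ i : {i // p i}, x i.1 = y i) then |ω x| else 0)) = |ω x| := by
    intro x
    rw [Finset.sum_eq_single (fun i : {i // p i} => x i.1)]
    · simp
    · intro y _ hy
      rw [if_neg]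
      intro h
      exact hy (funext fun i => (h i).symm)
    · simp
  simp only [marg]
  calc ∑ y : ∀ i : {i // p i}, X i.1,
        |∑ x : ∀ i, X i, if (∀ i : {i // p i}, x i.1 = y i) then ω x else 0|
      ≤ ∑ y : ∀ i : {i // p i}, X i.1, ∑ x : ∀ i, X i,
          |if (∀ i : {i // p i}, x i.1 = y i) then ω x else 0| :=
        Finset.sum_le_sum fun y _ => Finset.abs_sum_le_sum_abs _ _
    _ = ∑ y : ∀ i : {i // p i}, X i.1, ∑ x : ∀ i, X i,
          (if (∀ i : {i // p i}, x i.1 = y i) then |ω x| else 0) := by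
        congr 1; funext y; congr 1; funext x; split <;> simp
    _ = ∑ x : ∀ i, X i, ∑ y : ∀ i : {i // p i}, X i.1,
          (if (∀ i : {i // p i}, x i.1 = y i) then |ω x| else 0) := Finset.sum_comm
    _ = ∑ x : ∀ i, X i, |ω x| := Finset.sum_congr rfl fun x _ => key x
    _ = tv X ω := rfl

lemma prodM_tv' (p : Fin (n + 1) → Prop) [DecidablePred p]
    (f : (∀ i : {i // p i}, X i.1) → ℝ) (g : (∀ i : {i // ¬ p i}, X i.1) → ℝ) :
    tv X (prodM X p f g) = (∑ y, |f y|) * (∑ z, |g z|) := by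
  calc tv X (prodM X p f g)
      = ∑ x : ∀ i, X i, |f (fun i => x i.1)| * |g (fun i => x i.1)| := by
        simp [tv, prodM, abs_mul]
    _ = ∑ yz : (∀ i : {i // p i}, X i.1) × (∀ i : {i // ¬ p i}, X i.1),
          |f yz.1| * |g yz.2| :=
        Fintype.sum_equiv (Equiv.piEquivPiSubtypeProd p fun i => X i) _ _ (fun x => rfl)
    _ = (∑ y, |f y|) * (∑ z, |g z|) := by
        rw [Finset.sum_mul_sum]
        exact Fintype.sum_prod_type _

lemma prodM_sub_left' (p : Fin (n + 1) → Prop) [DecidablePred p]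
    (f f' : (∀ i : {i // p i}, X i.1) → ℝ) (g : (∀ i : {i // ¬ p i}, X i.1) → ℝ) :
    prodM X p (f - f') g = prodM X p f g - prodM X p f' g := by
  funext x; simp [prodM, sub_mul]

lemma prodM_sub_right' (p : Fin (n + 1) → Prop) [DecidablePred p]
    (f : (∀ i : {i // p i}, X i.1) → ℝ) (g g' : (∀ i : {i // ¬ p i}, X i.1) → ℝ) :
    prodM X p f (g - g') = prodM X p f g - prodM X p f g' := by
  funext x; simp [prodM, mul_sub]

lemma tv_R_le' (α : Fin n) (ω : Meas X) : tv X (R X α ω) ≤ tv X ω := by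
  by_cases h : ω = 0
  · simp [h, R, tv]
  · rw [R, if_neg h, tv_smul', prodM_tv', abs_inv, abs_of_pos (tv_pos' X ω h)]
    have ht := tv_pos' X ω h
    have h1 := marg_tv_le' X (fun i => i.val ≤ α.val) ω
    have h2 := marg_tv_le' X (fun i => ¬ i.val ≤ α.val) ω
    have hn1 : (0:ℝ) ≤ ∑ y, |marg X (fun i => i.val ≤ α.val) ω y| :=
      Finset.sum_nonneg fun _ _ => abs_nonneg _
    calc (tv X ω)⁻¹ * ((∑ y, |marg X (fun i => i.val ≤ α.val) ω y|) *
          (∑ z, |marg X (fun i => ¬ i.val ≤ α.val) ω z|))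
        ≤ (tv X ω)⁻¹ * (tv X ω * tv X ω) := by
          apply mul_le_mul_of_nonneg_left _ (inv_nonneg.2 ht.le)
          exact mul_le_mul h1 h2 (Finset.sum_nonneg fun _ _ => abs_nonneg _) ht.le
      _ = tv X ω := by field_simp
      _ ≤ tv X ω := le_refl _

lemma R_lip_key' (α : Fin n) (ω ω' : Meas X) (hω : ω ≠ 0) (hω' : ω' ≠ 0)
    (hle : tv X ω' ≤ tv X ω) :
    tv X (R X α ω - R X α ω') ≤ 3 * tv X (ω - ω') := by
  set p : Fin (n + 1) → Prop := fun i => i.val ≤ α.val with hp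
  set t := tv X ω with htdef
  set t' := tv X ω' with ht'def
  have ht : 0 < t := tv_pos' X ω hω
  have ht' : 0 < t' := tv_pos' X ω' hω'
  set A := marg X p ω with hA
  set A' := marg X p ω' with hA'
  set B := marg X (fun i => ¬ p i) ω with hB
  set B' := marg X (fun i => ¬ p i) ω' with hB'
  set d := tv X (ω - ω') with hd
  have hd0 : 0 ≤ d := tv_nonneg' X _
  have hdec : R X α ω - R X α ω' =
      t⁻¹ • prodM X p (A - A') B + t⁻¹ • prodM X p A' (B - B')
        + (t⁻¹ - t'⁻¹) • prodM X p A' B' := by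
    rw [R, R, if_neg hω, if_neg hω']
    funext x
    simp only [Pi.sub_apply, Pi.add_apply, Pi.smul_apply, smul_eq_mul, prodM]
    ring
  -- bounds on marginals
  have hAA' : ∑ y, |(A - A') y| ≤ d := by
    rw [hA, hA', ← marg_sub']
    exact marg_tv_le' X p (ω - ω')
  have hBB' : ∑ z, |(B - B') z| ≤ d := by
    rw [hB, hB', ← marg_sub']
    exact marg_tv_le' X (fun i => ¬ p i) (ω - ω')
  have hBt : ∑ z, |B z| ≤ t := marg_tv_le' X _ ω
  have hA't' : ∑ y, |A' y| ≤ t' := marg_tv_le' X _ ω'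
  have hB't' : ∑ z, |B' z| ≤ t' := marg_tv_le' X _ ω'
  have nn1 : (0:ℝ) ≤ ∑ y, |(A - A') y| := Finset.sum_nonneg fun _ _ => abs_nonneg _
  have nn2 : (0:ℝ) ≤ ∑ z, |(B - B') z| := Finset.sum_nonneg fun _ _ => abs_nonneg _
  have nn3 : (0:ℝ) ≤ ∑ y, |A' y| := Finset.sum_nonneg fun _ _ => abs_nonneg _
  have nn4 : (0:ℝ) ≤ ∑ z, |B z| := Finset.sum_nonneg fun _ _ => abs_nonneg _
  have nn5 : (0:ℝ) ≤ ∑ z, |B' z| := Finset.sum_nonneg fun _ _ => abs_nonneg _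
  -- triangle inequality
  have htri : tv X (R X α ω - R X α ω') ≤
      tv X (t⁻¹ • prodM X p (A - A') B) + tv X (t⁻¹ • prodM X p A' (B - B'))
        + tv X ((t⁻¹ - t'⁻¹) • prodM X p A' B') := by
    rw [hdec]
    calc tv X (t⁻¹ • prodM X p (A - A') B + t⁻¹ • prodM X p A' (B - B')
          + (t⁻¹ - t'⁻¹) • prodM X p A' B')
        ≤ tv X (t⁻¹ • prodM X p (A - A') B + t⁻¹ • prodM X p A' (B - B'))
            + tv X ((t⁻¹ - t'⁻¹) • prodM X p A' B') := tv_add_le' X _ _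
      _ ≤ tv X (t⁻¹ • prodM X p (A - A') B) + tv X (t⁻¹ • prodM X p A' (B - B'))
            + tv X ((t⁻¹ - t'⁻¹) • prodM X p A' B') := by
          have := tv_add_le' X (t⁻¹ • prodM X p (A - A') B) (t⁻¹ • prodM X p A' (B - B'))
          linarith
  -- term 1
  have hterm1 : tv X (t⁻¹ • prodM X p (A - A') B) ≤ d := by
    rw [tv_smul', prodM_tv', abs_inv, abs_of_pos ht]
    calc t⁻¹ * ((∑ y, |(A - A') y|) * (∑ z, |B z|))
        ≤ t⁻¹ * (d * t) := by
          apply mul_le_mul_of_nonneg_left _ (inv_nonneg.2 ht.le)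
          exact mul_le_mul hAA' hBt nn4 hd0
      _ = d := by field_simp
  -- term 2
  have hterm2 : tv X (t⁻¹ • prodM X p A' (B - B')) ≤ d := by
    rw [tv_smul', prodM_tv', abs_inv, abs_of_pos ht]
    calc t⁻¹ * ((∑ y, |A' y|) * (∑ z, |(B - B') z|))
        ≤ t⁻¹ * (t * d) := by
          apply mul_le_mul_of_nonneg_left _ (inv_nonneg.2 ht.le)
          exact mul_le_mul (hA't'.trans hle) hBB' nn2 ht.le
      _ = d := by field_simp
  -- term 3
  have hterm3 : tv X ((t⁻¹ - t'⁻¹) • prodM X p A' B') ≤ d := by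
    rw [tv_smul', prodM_tv']
    have hinv : t⁻¹ ≤ t'⁻¹ := by
      apply inv_anti₀ ht' hle
    have habs : |t⁻¹ - t'⁻¹| = t'⁻¹ - t⁻¹ := by
      rw [abs_sub_comm, abs_of_nonneg (sub_nonneg.2 hinv)]
    rw [habs]
    have hstep1 : (t'⁻¹ - t⁻¹) * ((∑ y, |A' y|) * (∑ z, |B' z|)) ≤
        (t'⁻¹ - t⁻¹) * (t' * t') := by
      apply mul_le_mul_of_nonneg_left _ (sub_nonneg.2 hinv)
      exact mul_le_mul hA't' hB't' nn5 ht'.le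
    have hstep2 : (t'⁻¹ - t⁻¹) * (t' * t') = (t - t') * t' / t := by
      field_simp
    have hstep3 : (t - t') * t' / t ≤ t - t' := by
      rw [div_le_iff₀ ht]
      have : t' ≤ t := hle
      nlinarith
    have hstep4 : t - t' ≤ d := tv_sub_tv_le' X ω ω'
    linarith
  linarith

/-- `R_α` is globally Lipschitz on signed measures with the total
variation norm, with Lipschitz constant at most 3. -/
theorem R_lipschitz (α : Fin n) (ω ω' : Meas X) :
    tv X (R X α ω - R X α ω') ≤ 3 * tv X (ω - ω') := by
  have hR0 : R X α 0 = 0 := by rw [R, if_pos rfl]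
  by_cases h : ω = 0
  · by_cases h' : ω' = 0
    · subst h; subst h'
      simp [hR0, tv]
    · subst h
      rw [hR0, zero_sub, tv_neg']
      have h1 : tv X (R X α ω') ≤ tv X ω' := tv_R_le' X α ω'
      have h2 : tv X ((0 : Meas X) - ω') = tv X ω' := by rw [zero_sub, tv_neg']
      rw [h2]
      have := tv_nonneg' X ω'
      linarith
  · by_cases h' : ω' = 0
    · subst h'
      rw [hR0, sub_zero]
      have h1 : tv X (R X α ω) ≤ tv X ω := tv_R_le' X α ω
      have h2 : tv X (ω - (0 : Meas X)) = tv X ω := by rw [sub_zero]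
      rw [h2]
      have := tv_nonneg' X ω
      linarith
    · rcases le_total (tv X ω') (tv X ω) with hle | hle
      · exact R_lip_key' X α ω ω' h h' hle
      · rw [tv_sub_comm' X (R X α ω) (R X α ω'), tv_sub_comm' X ω ω']
        exact R_lip_key' X α ω' ω h' h hle

end Recombination
end

section
/- Restricted to finite positive measures, recombinators at different links commute: R_α(R_β(ν)) = R_β(R_α(ν)) for all links α < β and every finite positive measure ν; moreover, both sides equal (1/‖ν‖²)·((π_{<α}.ν) ⊗ (π_{[α,β]}.ν) ⊗ (π_{>β}.ν)), where π_{[α,β]} is the projection onto the sites strictly between links α and β. -/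
open Finset

namespace Recombination

variable {n : ℕ} (X : Fin (n + 1) → Type*) [∀ i, Fintype (X i)] [∀ i, DecidableEq (X i)]

section CommuteAux

lemma sum_split (p : Fin (n + 1) → Prop) [DecidablePred p] (F : (∀ i, X i) → ℝ) :
    ∑ x, F x = ∑ u : ∀ i : {i // p i}, X i.1, ∑ z : ∀ i : {i // ¬ p i}, X i.1,
      F (fun i => if h : p i then u ⟨i, h⟩ else z ⟨i, h⟩) := by
  rw [← Equiv.sum_comp (Equiv.piEquivPiSubtypeProd p X).symm F, Fintype.sum_prod_type]
  rfl

lemma marg_prodM (p q : Fin (n + 1) → Prop) [DecidablePred p] [DecidablePred q]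
    (f : (∀ i : {i // q i}, X i.1) → ℝ) (g : (∀ i : {i // ¬ q i}, X i.1) → ℝ)
    (y : ∀ i : {i // p i}, X i.1) :
    marg X p (prodM X q f g) y =
      (∑ u : ∀ i : {i // q i}, X i.1,
        if ∀ i : {i // q i}, ∀ h : p i.1, u i = y ⟨i.1, h⟩ then f u else 0) *
      (∑ z : ∀ i : {i // ¬ q i}, X i.1,
        if ∀ i : {i // ¬ q i}, ∀ h : p i.1, z i = y ⟨i.1, h⟩ then g z else 0) := by
  simp only [marg, prodM]
  rw [sum_split X q (fun x => if (∀ i : {i // p i}, x i.1 = y i) then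
        (f fun i => x i.1) * (g fun i => x i.1) else 0),
    Finset.sum_mul_sum]
  refine Finset.sum_congr rfl fun u _ => Finset.sum_congr rfl fun z _ => ?_
  have h1 : (fun i : {i // q i} =>
      (fun j => if h : q j then u ⟨j, h⟩ else z ⟨j, h⟩) i.1) = u := by
    funext i; simp [i.2]
  have h2 : (fun i : {i // ¬ q i} =>
      (fun j => if h : q j then u ⟨j, h⟩ else z ⟨j, h⟩) i.1) = z := by
    funext i; simp [i.2]
  rw [h1, h2]
  have hcond : (∀ i : {i // p i},
      (fun j => if h : q j then u ⟨j, h⟩ else z ⟨j, h⟩) i.1 = y i) ↔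
      ((∀ i : {i // q i}, ∀ h : p i.1, u i = y ⟨i.1, h⟩) ∧
       (∀ i : {i // ¬ q i}, ∀ h : p i.1, z i = y ⟨i.1, h⟩)) := by
    constructor
    · intro h
      constructor
      · intro i hp
        simpa [i.2] using h ⟨i.1, hp⟩
      · intro i hp
        simpa [i.2] using h ⟨i.1, hp⟩
    · rintro ⟨hA, hB⟩ i
      by_cases hq : q i.1
      · simpa [hq] using hA ⟨i.1, hq⟩ i.2
      · simpa [hq] using hB ⟨i.1, hq⟩ i.2
  rw [if_congr hcond rfl rfl]
  by_cases hA : (∀ i : {i // q i}, ∀ h : p i.1, u i = y ⟨i.1, h⟩)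
  · by_cases hB : (∀ i : {i // ¬ q i}, ∀ h : p i.1, z i = y ⟨i.1, h⟩)
    · rw [if_pos ⟨hA, hB⟩, if_pos hA, if_pos hB]
    · rw [if_neg (fun h => hB h.2), if_pos hA, if_neg hB, mul_zero]
  · rw [if_neg (fun h => hA h.1), if_neg hA, zero_mul]

lemma sum_cond_pin (p q : Fin (n + 1) → Prop) [DecidablePred p] [DecidablePred q]
    (hqp : ∀ i, q i → p i) (f : (∀ i : {i // q i}, X i.1) → ℝ)
    (y : ∀ i : {i // p i}, X i.1) :
    (∑ u : ∀ i : {i // q i}, X i.1,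
      if ∀ i : {i // q i}, ∀ h : p i.1, u i = y ⟨i.1, h⟩ then f u else 0)
      = f (fun i => y ⟨i.1, hqp i.1 i.2⟩) := by
  have hc : ∀ u : ∀ i : {i // q i}, X i.1,
      (∀ i : {i // q i}, ∀ h : p i.1, u i = y ⟨i.1, h⟩) ↔
        u = fun i : {i // q i} => y ⟨i.1, hqp i.1 i.2⟩ := by
    intro u
    constructor
    · intro h; funext i; exact h i (hqp i.1 i.2)
    · rintro rfl i h; rfl
  simp_rw [hc]
  simp

lemma sum_cond_free (p q : Fin (n + 1) → Prop) [DecidablePred p] [DecidablePred q]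
    (hd : ∀ i, q i → ¬ p i) (f : (∀ i : {i // q i}, X i.1) → ℝ)
    (y : ∀ i : {i // p i}, X i.1) :
    (∑ u : ∀ i : {i // q i}, X i.1,
      if ∀ i : {i // q i}, ∀ h : p i.1, u i = y ⟨i.1, h⟩ then f u else 0)
      = ∑ u, f u :=
  Finset.sum_congr rfl fun u _ => if_pos fun i hp => absurd hp (hd i.1 i.2)

lemma sum_cond_marg (p q m : Fin (n + 1) → Prop) [DecidablePred p] [DecidablePred q]
    [DecidablePred m] (hm : ∀ i, m i ↔ p i ∧ q i) (ν : Meas X)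
    (y : ∀ i : {i // p i}, X i.1) :
    (∑ u : ∀ i : {i // q i}, X i.1,
      if ∀ i : {i // q i}, ∀ h : p i.1, u i = y ⟨i.1, h⟩ then marg X q ν u else 0)
      = marg X m ν (fun i => y ⟨i.1, ((hm i.1).1 i.2).1⟩) := by
  simp only [marg]
  have key : ∀ u : ∀ i : {i // q i}, X i.1,
      (if (∀ i : {i // q i}, ∀ h : p i.1, u i = y ⟨i.1, h⟩) then
        (∑ x : ∀ i, X i, if (∀ i : {i // q i}, x i.1 = u i) then ν x else 0) else 0)
      = ∑ x : ∀ i, X i,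
          if ((fun i : {i // q i} => x i.1) = u ∧
              ∀ i : {i // q i}, ∀ h : p i.1, u i = y ⟨i.1, h⟩) then ν x else 0 := by
    intro u
    by_cases hC : (∀ i : {i // q i}, ∀ h : p i.1, u i = y ⟨i.1, h⟩)
    · rw [if_pos hC]
      refine Finset.sum_congr rfl fun x _ => if_congr ?_ rfl rfl
      exact ⟨fun h => ⟨funext h, hC⟩, fun h i => congrFun h.1 i⟩
    · rw [if_neg hC]
      exact (Finset.sum_eq_zero fun x _ => if_neg fun h => hC h.2).symm
  simp_rw [key]
  rw [Finset.sum_comm]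
  refine Finset.sum_congr rfl fun x _ => ?_
  simp_rw [ite_and]
  rw [Finset.sum_ite_eq, if_pos (Finset.mem_univ _)]
  refine if_congr ⟨fun h i => ?_, fun h i hp => ?_⟩ rfl rfl
  · exact h ⟨i.1, ((hm i.1).1 i.2).2⟩ ((hm i.1).1 i.2).1
  · exact h ⟨i.1, (hm i.1).2 ⟨hp, i.2⟩⟩

lemma mass_marg (q : Fin (n + 1) → Prop) [DecidablePred q] (ν : Meas X) :
    ∑ u : ∀ i : {i // q i}, X i.1, marg X q ν u = ∑ x, ν x := by
  simp only [marg]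
  rw [Finset.sum_comm]
  refine Finset.sum_congr rfl fun x _ => ?_
  have hc : ∀ u : ∀ i : {i // q i}, X i.1,
      (∀ i : {i // q i}, x i.1 = u i) ↔ (fun i : {i // q i} => x i.1) = u :=
    fun u => ⟨fun h => funext h, fun h i => congrFun h i⟩
  simp_rw [hc]
  rw [Finset.sum_ite_eq, if_pos (Finset.mem_univ _)]

lemma marg_smul (p : Fin (n + 1) → Prop) [DecidablePred p] (c : ℝ) (ω : Meas X)
    (y : ∀ i : {i // p i}, X i.1) :
    marg X p (c • ω) y = c * marg X p ω y := by
  simp only [marg, Pi.smul_apply, smul_eq_mul, Finset.mul_sum, mul_ite, mul_zero]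

lemma marg_congr (p p' : Fin (n + 1) → Prop) [DecidablePred p] [DecidablePred p']
    (h : ∀ i, p i ↔ p' i) (ν : Meas X) (y : ∀ i : {i // p' i}, X i.1) :
    marg X p ν (fun i => y ⟨i.1, (h i.1).1 i.2⟩) = marg X p' ν y := by
  simp only [marg]
  refine Finset.sum_congr rfl fun x _ =>
    if_congr ⟨fun hc i => ?_, fun hc i => ?_⟩ rfl rfl
  · exact hc ⟨i.1, (h i.1).2 i.2⟩
  · exact hc ⟨i.1, (h i.1).1 i.2⟩

lemma marg_nonneg (p : Fin (n + 1) → Prop) [DecidablePred p] (ν : Meas X)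
    (hν : Pos X ν) (y : ∀ i : {i // p i}, X i.1) : 0 ≤ marg X p ν y := by
  refine Finset.sum_nonneg fun x _ => ?_
  split
  · exact hν x
  · exact le_refl 0

lemma tv_eq_mass (ν : Meas X) (hν : Pos X ν) : tv X ν = ∑ x, ν x :=
  Finset.sum_congr rfl fun x _ => abs_of_nonneg (hν x)

lemma tv_pos (ν : Meas X) (hν : Pos X ν) (h0 : ν ≠ 0) : 0 < tv X ν := by
  have : ∃ x, ν x ≠ 0 := by
    by_contra h
    push_neg at h
    exact h0 (funext h)
  obtain ⟨x, hx⟩ := this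
  refine lt_of_lt_of_le (abs_pos.2 hx) ?_
  rw [tv]
  exact Finset.single_le_sum (f := fun x => |ν x|) (fun i _ => abs_nonneg _)
    (Finset.mem_univ x)

lemma mass_prodM (q : Fin (n + 1) → Prop) [DecidablePred q]
    (f : (∀ i : {i // q i}, X i.1) → ℝ) (g : (∀ i : {i // ¬ q i}, X i.1) → ℝ) :
    ∑ x, prodM X q f g x = (∑ u, f u) * (∑ z, g z) := by
  rw [sum_split X q (fun x => prodM X q f g x), Finset.sum_mul_sum]
  refine Finset.sum_congr rfl fun u _ => Finset.sum_congr rfl fun z _ => ?_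
  simp only [prodM]
  have h1 : (fun i : {i // q i} =>
      (fun j => if h : q j then u ⟨j, h⟩ else z ⟨j, h⟩) i.1) = u := by
    funext i; simp [i.2]
  have h2 : (fun i : {i // ¬ q i} =>
      (fun j => if h : q j then u ⟨j, h⟩ else z ⟨j, h⟩) i.1) = z := by
    funext i; simp [i.2]
  rw [h1, h2]

lemma R_eq (γ : Fin n) (ω : Meas X) (h0 : ω ≠ 0) :
    R X γ ω = (tv X ω)⁻¹ • prodM X (fun i => i.val ≤ γ.val)
      (marg X (fun i => i.val ≤ γ.val) ω) (marg X (fun i => ¬ i.val ≤ γ.val) ω) := by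
  rw [R, if_neg h0]

lemma R_pos (γ : Fin n) (ω : Meas X) (hω : Pos X ω) : Pos X (R X γ ω) := by
  by_cases h0 : ω = 0
  · rw [R, if_pos h0]; intro x; exact le_refl 0
  · rw [R_eq X γ ω h0]
    intro x
    refine mul_nonneg (inv_nonneg.2 (Finset.sum_nonneg fun i _ => abs_nonneg _)) ?_
    exact mul_nonneg (marg_nonneg X _ ω hω _) (marg_nonneg X _ ω hω _)

lemma tv_R (γ : Fin n) (ω : Meas X) (hω : Pos X ω) (h0 : ω ≠ 0) :
    tv X (R X γ ω) = tv X ω := by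
  have ht := tv_pos X ω hω h0
  rw [tv_eq_mass X _ (R_pos X γ ω hω), R_eq X γ ω h0]
  simp only [Pi.smul_apply, smul_eq_mul, ← Finset.mul_sum]
  rw [mass_prodM, mass_marg, mass_marg, ← tv_eq_mass X ω hω]
  field_simp

lemma R_ne_zero (γ : Fin n) (ω : Meas X) (hω : Pos X ω) (h0 : ω ≠ 0) :
    R X γ ω ≠ 0 := by
  intro h
  have h1 := tv_R X γ ω hω h0
  rw [h] at h1
  have h2 : tv X (0 : Meas X) = 0 := by simp [tv]
  rw [h2] at h1
  have h3 := tv_pos X ω hω h0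
  rw [← h1] at h3
  exact lt_irrefl 0 h3

lemma key1 (α β : Fin n) (hαβ : α.val < β.val) (ν : Meas X) (hν : Pos X ν)
    (h0 : ν ≠ 0) :
    R X α (R X β ν) = fun x =>
      ((tv X ν)⁻¹) ^ 2 *
        (marg X (fun i => i.val ≤ α.val) ν (fun i => x i.1) *
          (marg X (fun i => α.val < i.val ∧ i.val ≤ β.val) ν (fun i => x i.1) *
            marg X (fun i => β.val < i.val) ν (fun i => x i.1))) := by
  have ht := tv_pos X ν hν h0
  have htne : tv X ν ≠ 0 := ne_of_gt ht
  have hR := R_eq X β ν h0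
  have hRpos := R_pos X β ν hν
  have hRne := R_ne_zero X β ν hν h0
  funext x
  rw [R_eq X α _ hRne, tv_R X β ν hν h0]
  simp only [Pi.smul_apply, smul_eq_mul, prodM]
  rw [hR]
  rw [marg_smul, marg_smul]
  rw [marg_prodM X (fun i => i.val ≤ α.val) (fun i => i.val ≤ β.val)]
  rw [marg_prodM X (fun i => ¬ i.val ≤ α.val) (fun i => i.val ≤ β.val)]
  rw [sum_cond_marg X (fun i => i.val ≤ α.val) (fun i => i.val ≤ β.val)
    (fun i => i.val ≤ α.val) (fun i => by omega) ν (fun i => x i.1)]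
  rw [sum_cond_free X (fun i => i.val ≤ α.val) (fun i => ¬ i.val ≤ β.val)
    (fun i hq => by omega) (marg X (fun i => ¬ i.val ≤ β.val) ν) (fun i => x i.1)]
  rw [mass_marg, ← tv_eq_mass X ν hν]
  rw [sum_cond_marg X (fun i => ¬ i.val ≤ α.val) (fun i => i.val ≤ β.val)
    (fun i => α.val < i.val ∧ i.val ≤ β.val) (fun i => by omega) ν (fun i => x i.1)]
  rw [sum_cond_pin X (fun i => ¬ i.val ≤ α.val) (fun i => ¬ i.val ≤ β.val)
    (fun i hq => by omega) (marg X (fun i => ¬ i.val ≤ β.val) ν) (fun i => x i.1)]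
  rw [marg_congr X (fun i => ¬ i.val ≤ β.val) (fun i => β.val < i.val)
    (fun i => by omega) ν (fun i => x i.1)]
  field_simp

lemma key2 (α β : Fin n) (hαβ : α.val < β.val) (ν : Meas X) (hν : Pos X ν)
    (h0 : ν ≠ 0) :
    R X β (R X α ν) = fun x =>
      ((tv X ν)⁻¹) ^ 2 *
        (marg X (fun i => i.val ≤ α.val) ν (fun i => x i.1) *
          (marg X (fun i => α.val < i.val ∧ i.val ≤ β.val) ν (fun i => x i.1) *
            marg X (fun i => β.val < i.val) ν (fun i => x i.1))) := by
  have ht := tv_pos X ν hν h0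
  have htne : tv X ν ≠ 0 := ne_of_gt ht
  have hR := R_eq X α ν h0
  have hRpos := R_pos X α ν hν
  have hRne := R_ne_zero X α ν hν h0
  funext x
  rw [R_eq X β _ hRne, tv_R X α ν hν h0]
  simp only [Pi.smul_apply, smul_eq_mul, prodM]
  rw [hR]
  rw [marg_smul, marg_smul]
  rw [marg_prodM X (fun i => i.val ≤ β.val) (fun i => i.val ≤ α.val)]
  rw [marg_prodM X (fun i => ¬ i.val ≤ β.val) (fun i => i.val ≤ α.val)]
  rw [sum_cond_pin X (fun i => i.val ≤ β.val) (fun i => i.val ≤ α.val)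
    (fun i hq => by omega) (marg X (fun i => i.val ≤ α.val) ν) (fun i => x i.1)]
  rw [sum_cond_marg X (fun i => i.val ≤ β.val) (fun i => ¬ i.val ≤ α.val)
    (fun i => α.val < i.val ∧ i.val ≤ β.val) (fun i => by omega) ν (fun i => x i.1)]
  rw [sum_cond_free X (fun i => ¬ i.val ≤ β.val) (fun i => i.val ≤ α.val)
    (fun i hq => by omega) (marg X (fun i => i.val ≤ α.val) ν) (fun i => x i.1)]
  rw [mass_marg, ← tv_eq_mass X ν hν]
  rw [sum_cond_marg X (fun i => ¬ i.val ≤ β.val) (fun i => ¬ i.val ≤ α.val)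
    (fun i => ¬ i.val ≤ β.val) (fun i => by omega) ν (fun i => x i.1)]
  rw [marg_congr X (fun i => ¬ i.val ≤ β.val) (fun i => β.val < i.val)
    (fun i => by omega) ν (fun i => x i.1)]
  field_simp

end CommuteAux

/-- on finite positive measures, recombinators at different links
`α < β` commute, and both compositions equal
`(1/‖ν‖²)·((π_{<α}.ν) ⊗ (π_{[α,β]}.ν) ⊗ (π_{>β}.ν))`. -/
theorem R_commute (α β : Fin n) (hαβ : α.val < β.val) (ν : Meas X) (hν : Pos X ν) :
    R X α (R X β ν) = R X β (R X α ν) ∧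
    R X α (R X β ν) = fun x =>
      ((tv X ν)⁻¹) ^ 2 *
        (marg X (fun i => i.val ≤ α.val) ν (fun i => x i.1) *
          (marg X (fun i => α.val < i.val ∧ i.val ≤ β.val) ν (fun i => x i.1) *
            marg X (fun i => β.val < i.val) ν (fun i => x i.1))) := by
  by_cases h0 : ν = 0
  · subst h0
    have hz : R X β (0 : Meas X) = 0 := by rw [R, if_pos rfl]
    have hz' : R X α (0 : Meas X) = 0 := by rw [R, if_pos rfl]
    rw [hz, hz', hz]
    refine ⟨rfl, ?_⟩
    funext x
    simp [marg]
  · have h1 := key1 X α β hαβ ν hν h0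
    have h2 := key2 X α β hαβ ν hν h0
    exact ⟨h1.trans h2.symm, h1⟩

end Recombination
end

section
/- Linear action on the solution simplex: for a positive measure ν on X, fixed t ≥ 0, and the coefficients a_G(t), one has R_H(∑_{G⊆L} a_G(t) R_G(ν)) = ∑_{G⊆L} a_G(t) R_{G∪H}(ν) for every H ⊆ L. (Although R_H is nonlinear, it acts linearly on this particular convex combination.) -/
/-!
Write `F_s ω x` for the `ω`-mass of the configurations that agree with `x` on the sites `s`;
the recombinator at a cut `t` is `ω ↦ ‖ω‖⁻¹ F_t ω · F_{tᶜ} ω`. Everything rests on the identity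
`F_s (F_t ω · F_{tᶜ} ω) = F_{s ∩ t} ω · F_{s ∖ t} ω`: it gives conservation of mass, marginal
consistency, idempotence, and commutativity of recombinators at nested cuts, hence
`R_α ∘ R_S = R_{S ∪ {α}}` on positive measures.

By induction on `H` it then suffices to move a single `R_α` inside the mixture
`∑_G a_G R_{G ∪ K} ν`. The marginal of `R_{G ∪ K} ν` on the sites `≤ α` only depends on the links
of `G` below `α`, the one on the sites `> α` only on the others, and `a_G` is a product of
independent Bernoulli weights over the links. So the two marginals of the mixture are
uncorrelated, and `R_α`, which multiplies them, acts linearly on it.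
-/

open Finset

namespace Recombination

variable {n : ℕ} (X : Fin (n + 1) → Type*) [∀ i, Fintype (X i)] [∀ i, DecidableEq (X i)]

section

variable {X}

noncomputable def fiberMass (s : Finset (Fin (n + 1))) (ω : Meas X) (x : ∀ i, X i) : ℝ :=
  ∑ y, if ∀ i ∈ s, y i = x i then ω y else 0

noncomputable def recomb (t : Finset (Fin (n + 1))) (ω : Meas X) : Meas X :=
  fun x => (tv X ω)⁻¹ * (fiberMass t ω x * fiberMass tᶜ ω x)

lemma marg_restrict_eq_fiberMass (p : Fin (n + 1) → Prop) [DecidablePred p] (ω : Meas X)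
    (x : ∀ i, X i) : marg X p ω (fun i => x i.1) = fiberMass {i | p i} ω x := by
  simp only [marg, fiberMass, Subtype.forall, mem_filter, mem_univ, true_and]

lemma R_eq_recomb (α : Fin n) : R X α = recomb (Iic α.castSucc) := by
  funext ω x
  unfold R
  split_ifs with h
  · simp [h, recomb, fiberMass]
  · simp only [recomb, Pi.smul_apply, smul_eq_mul, prodM, marg_restrict_eq_fiberMass]
    congr 3 <;> ext i <;> simp [Fin.le_iff_val_le_val]

lemma fiberMass_empty (ω : Meas X) (x : ∀ i, X i) : fiberMass ∅ ω x = mass X ω := by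
  simp [fiberMass, mass]

lemma fiberMass_const_mul (s : Finset (Fin (n + 1))) (c : ℝ) (ω : Meas X) (x : ∀ i, X i) :
    fiberMass s (fun y => c * ω y) x = c * fiberMass s ω x := by
  simp only [fiberMass, mul_sum, mul_ite, mul_zero]

lemma fiberMass_sum_smul {ι : Type*} (S : Finset ι) (c : ι → ℝ) (μ : ι → Meas X)
    (s : Finset (Fin (n + 1))) (x : ∀ i, X i) :
    fiberMass s (∑ j ∈ S, c j • μ j) x = ∑ j ∈ S, c j * fiberMass s (μ j) x := by
  simp only [fiberMass, Finset.sum_apply, Pi.smul_apply, smul_eq_mul, mul_sum]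
  rw [sum_comm]
  simp [sum_ite_irrel]

lemma fiberMass_mul_fiberMass_compl (s t : Finset (Fin (n + 1))) (ω : Meas X) (x : ∀ i, X i) :
    fiberMass s (fun y => fiberMass t ω y * fiberMass tᶜ ω y) x
      = fiberMass (s ∩ t) ω x * fiberMass (s \ t) ω x := by
  let glue (z w : ∀ i, X i) : ∀ i, X i := fun i => if i ∈ t then z i else w i
  have hglue : ∀ z w y, ((∀ i ∈ t, z i = y i) ∧ ∀ i ∈ tᶜ, w i = y i) ↔ y = glue z w := by
    intro z w y
    constructor
    · rintro ⟨hz, hw⟩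
      funext i
      by_cases hi : i ∈ t
      · simp [glue, hi, hz i hi]
      · simp [glue, hi, hw i (mem_compl.mpr hi)]
    · rintro rfl
      exact ⟨fun i hi => by simp [glue, hi], fun i hi => by simp_all [glue]⟩
  have hagree : ∀ z w, (∀ i ∈ s, glue z w i = x i) ↔
      (∀ i ∈ s ∩ t, z i = x i) ∧ ∀ i ∈ s \ t, w i = x i := by
    intro z w
    simp only [mem_inter, mem_sdiff, and_imp]
    constructor
    · intro h
      exact ⟨fun i hs ht => by simpa [glue, ht] using h i hs,
        fun i hs ht => by simpa [glue, ht] using h i hs⟩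
    · rintro ⟨hz, hw⟩ i hs
      by_cases ht : i ∈ t
      · simpa [glue, ht] using hz i hs ht
      · simpa [glue, ht] using hw i hs ht
  have hterm : ∀ y z w, ((if ∀ i ∈ t, z i = y i then ω z else 0) *
      if ∀ i ∈ tᶜ, w i = y i then ω w else 0) = if y = glue z w then ω z * ω w else 0 := by
    intro y z w
    rw [ite_zero_mul_ite_zero, if_congr (hglue z w y) rfl rfl]
  simp only [fiberMass, sum_mul_sum, hterm]
  rw [← sum_filter, sum_comm]
  refine sum_congr rfl fun z _ => ?_
  rw [sum_comm]
  refine sum_congr rfl fun w _ => ?_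
  rw [sum_ite_eq', ite_zero_mul_ite_zero]
  simp only [mem_filter, mem_univ, true_and, hagree]

omit [∀ i, DecidableEq (X i)] in
lemma tv_eq_mass_s16 {ω : Meas X} (hω : Pos X ω) : tv X ω = mass X ω :=
  sum_congr rfl fun x _ => abs_of_nonneg (hω x)

omit [∀ i, DecidableEq (X i)] in
lemma eq_zero_of_mass_eq_zero {ω : Meas X} (hω : Pos X ω) (h : mass X ω = 0) : ω = 0 :=
  funext fun x => (sum_eq_zero_iff_of_nonneg fun y _ => hω y).mp h x (mem_univ x)

lemma fiberMass_nonneg {ω : Meas X} (hω : Pos X ω) (s : Finset (Fin (n + 1))) (x : ∀ i, X i) :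
    0 ≤ fiberMass s ω x :=
  sum_nonneg fun y _ => by split_ifs <;> simp [hω y]

lemma recomb_apply (t : Finset (Fin (n + 1))) (ω : Meas X) (x : ∀ i, X i) :
    recomb t ω x = (tv X ω)⁻¹ * (fiberMass t ω x * fiberMass tᶜ ω x) := rfl

lemma fiberMass_recomb (s t : Finset (Fin (n + 1))) (ω : Meas X) (x : ∀ i, X i) :
    fiberMass s (recomb t ω) x = (tv X ω)⁻¹ * (fiberMass (s ∩ t) ω x * fiberMass (s \ t) ω x) := by
  unfold recomb
  rw [fiberMass_const_mul, fiberMass_mul_fiberMass_compl]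

lemma recomb_pos {ω : Meas X} (hω : Pos X ω) (t : Finset (Fin (n + 1))) : Pos X (recomb t ω) :=
  fun x => mul_nonneg (inv_nonneg.mpr (sum_nonneg fun y _ => abs_nonneg (ω y)))
    (mul_nonneg (fiberMass_nonneg hω t x) (fiberMass_nonneg hω tᶜ x))

lemma mass_recomb {ω : Meas X} (hω : Pos X ω) (t : Finset (Fin (n + 1))) :
    mass X (recomb t ω) = mass X ω := by
  rcases isEmpty_or_nonempty (∀ i, X i) with hX | ⟨⟨x⟩⟩
  · simp [mass]
  rw [← fiberMass_empty _ x, fiberMass_recomb, empty_inter, empty_sdiff,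
    fiberMass_empty, tv_eq_mass_s16 hω]
  rcases eq_or_ne (mass X ω) 0 with hm | hm
  · simp [hm]
  · field_simp

lemma tv_recomb {ω : Meas X} (hω : Pos X ω) (t : Finset (Fin (n + 1))) :
    tv X (recomb t ω) = tv X ω := by
  rw [tv_eq_mass_s16 (recomb_pos hω t), tv_eq_mass_s16 hω, mass_recomb hω]

lemma fiberMass_recomb_of_subset {ω : Meas X} (hω : Pos X ω) {s t : Finset (Fin (n + 1))}
    (h : s ⊆ t ∨ s ⊆ tᶜ) : fiberMass s (recomb t ω) = fiberMass s ω := by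
  funext x
  rw [fiberMass_recomb, tv_eq_mass_s16 hω]
  rcases eq_or_ne (mass X ω) 0 with hm | hm
  · simp [eq_zero_of_mass_eq_zero hω hm, fiberMass]
  rcases h with h | h
  · rw [inter_eq_left.mpr h, sdiff_eq_empty_iff_subset.mpr h, fiberMass_empty]
    field_simp
  · have hd : Disjoint s t := subset_compl_iff_disjoint_right.mp h
    rw [disjoint_iff_inter_eq_empty.mp hd, sdiff_eq_self_of_disjoint hd,
      fiberMass_empty]
    field_simp

lemma recomb_idem {ω : Meas X} (hω : Pos X ω) (t : Finset (Fin (n + 1))) :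
    recomb t (recomb t ω) = recomb t ω := by
  funext x
  rw [recomb_apply, tv_recomb hω, fiberMass_recomb_of_subset hω (Or.inl subset_rfl),
    fiberMass_recomb_of_subset hω (Or.inr subset_rfl), recomb_apply]

lemma recomb_comm_of_subset {ω : Meas X} (hω : Pos X ω) {a b : Finset (Fin (n + 1))}
    (hab : a ⊆ b) : recomb a (recomb b ω) = recomb b (recomb a ω) := by
  funext x
  rw [recomb_apply, recomb_apply b, tv_recomb hω, tv_recomb hω,
    fiberMass_recomb_of_subset hω (Or.inl hab),
    fiberMass_recomb_of_subset hω (Or.inr (compl_subset_compl.mpr hab)),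
    fiberMass_recomb, fiberMass_recomb, inter_eq_right.mpr hab,
    sdiff_eq_inter_compl b a, inter_comm b, sdiff_eq_inter_compl,
    inter_eq_right.mpr (compl_subset_compl.mpr hab)]
  ring

lemma R_comm {ω : Meas X} (hω : Pos X ω) (α β : Fin n) :
    R X α (R X β ω) = R X β (R X α ω) := by
  simp only [R_eq_recomb]
  rcases le_total α β with h | h
  · exact recomb_comm_of_subset hω (Iic_subset_Iic.mpr (Fin.castSucc_le_castSucc_iff.mpr h))
  · exact (recomb_comm_of_subset hω
      (Iic_subset_Iic.mpr (Fin.castSucc_le_castSucc_iff.mpr h))).symm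

lemma pos_foldr_R {ω : Meas X} (hω : Pos X ω) (l : List (Fin n)) :
    Pos X (l.foldr (fun α ν => R X α ν) ω) := by
  induction l with
  | nil => exact hω
  | cons α l ih =>
    rw [List.foldr_cons, R_eq_recomb]
    exact recomb_pos ih _

lemma foldr_R_perm {ω : Meas X} (hω : Pos X ω) {l₁ l₂ : List (Fin n)} (hl : l₁.Perm l₂) :
    l₁.foldr (fun α ν => R X α ν) ω = l₂.foldr (fun α ν => R X α ν) ω := by
  induction hl with
  | nil => rfl
  | cons α _ ih => exact congrArg (R X α) ih
  | swap α β l => exact R_comm (pos_foldr_R hω l) β α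
  | trans _ _ ih₁ ih₂ => exact ih₁.trans ih₂

lemma RG_pos {ω : Meas X} (hω : Pos X ω) (S : Finset (Fin n)) : Pos X (RG X S ω) :=
  pos_foldr_R hω _

lemma mass_RG {ω : Meas X} (hω : Pos X ω) (S : Finset (Fin n)) :
    mass X (RG X S ω) = mass X ω := by
  unfold RG
  induction S.sort (· ≤ ·) with
  | nil => rfl
  | cons α l ih => rw [List.foldr_cons, R_eq_recomb, mass_recomb (pos_foldr_R hω l), ih]

lemma RG_insert_of_notMem {ω : Meas X} (hω : Pos X ω) {α : Fin n} {S : Finset (Fin n)}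
    (hα : α ∉ S) : RG X (insert α S) ω = R X α (RG X S ω) := by
  have hperm : ((insert α S).sort (· ≤ ·)).Perm (α :: S.sort (· ≤ ·)) := by
    rw [← Multiset.coe_eq_coe, ← Multiset.cons_coe, sort_eq, sort_eq,
      insert_val_of_notMem hα]
  exact foldr_R_perm hω hperm

lemma R_RG {ω : Meas X} (hω : Pos X ω) (α : Fin n) (S : Finset (Fin n)) :
    R X α (RG X S ω) = RG X (insert α S) ω := by
  by_cases hα : α ∈ S
  · have hS : RG X S ω = R X α (RG X (S.erase α) ω) := by
      rw [← RG_insert_of_notMem hω (S.notMem_erase α), insert_erase hα]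
    rw [insert_eq_of_mem hα, hS, R_eq_recomb, recomb_idem (RG_pos hω _)]
  · exact (RG_insert_of_notMem hω hα).symm

lemma fiberMass_RG_union {ν : Meas X} (hν : Pos X ν) {s : Finset (Fin (n + 1))}
    {B : Finset (Fin n)}
    (hB : ∀ β ∈ B, s ⊆ Iic β.castSucc ∨ s ⊆ (Iic β.castSucc)ᶜ)
    (S : Finset (Fin n)) : fiberMass s (RG X (B ∪ S) ν) = fiberMass s (RG X S ν) := by
  induction B using Finset.induction_on with
  | empty => rw [empty_union]
  | insert β B _ ih =>
    rw [insert_union, ← R_RG hν, R_eq_recomb,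
      fiberMass_recomb_of_subset (RG_pos hν _) (hB β (mem_insert_self β B)),
      ih fun γ hγ => hB γ (mem_insert_of_mem hγ)]

section Bernoulli

variable {ι : Type*} [DecidableEq ι]

noncomputable def bernoulliWeight (p : ι → ℝ) (s G : Finset ι) : ℝ :=
  (∏ i ∈ s \ G, (1 - p i)) * ∏ i ∈ G, p i

lemma sum_bernoulliWeight (p : ι → ℝ) (s : Finset ι) :
    ∑ G ∈ s.powerset, bernoulliWeight p s G = 1 := by
  have h := prod_add p (fun i => 1 - p i) s
  simp only [add_sub_cancel, prod_const_one] at h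
  rw [h]
  exact sum_congr rfl fun G _ => mul_comm _ _

lemma bernoulliWeight_union (p : ι → ℝ) {s₁ s₂ A B : Finset ι} (hd : Disjoint s₁ s₂)
    (hA : A ⊆ s₁) (hB : B ⊆ s₂) :
    bernoulliWeight p (s₁ ∪ s₂) (A ∪ B) = bernoulliWeight p s₁ A * bernoulliWeight p s₂ B := by
  have hsdiff : (s₁ ∪ s₂) \ (A ∪ B) = (s₁ \ A) ∪ (s₂ \ B) := by
    ext i
    simp only [mem_sdiff, mem_union]
    have := disjoint_left.mp hd
    grind
  unfold bernoulliWeight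
  rw [hsdiff, prod_union (hd.mono sdiff_subset sdiff_subset),
    prod_union (hd.mono hA hB)]
  ring

lemma sum_powerset_union {M : Type*} [AddCommMonoid M] {s₁ s₂ : Finset ι} (hd : Disjoint s₁ s₂)
    (f : Finset ι → M) :
    ∑ G ∈ (s₁ ∪ s₂).powerset, f G = ∑ A ∈ s₁.powerset, ∑ B ∈ s₂.powerset, f (A ∪ B) := by
  rw [← sum_product']
  symm
  refine sum_nbij' (fun P => P.1 ∪ P.2) (fun G => (G ∩ s₁, G ∩ s₂)) ?_ ?_ ?_ ?_
    fun _ _ => rfl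
  · intro P hP
    simp only [mem_product, mem_powerset] at hP ⊢
    exact union_subset_union hP.1 hP.2
  · intro G _
    simp only [mem_product, mem_powerset]
    exact ⟨inter_subset_right, inter_subset_right⟩
  · intro P hP
    simp only [mem_product, mem_powerset] at hP
    have := disjoint_left.mp hd
    ext i <;> simp only [mem_inter, mem_union] <;> grind
  · intro G hG
    simp only [mem_powerset] at hG
    rw [← inter_union_distrib_left, inter_eq_left.mpr hG]

lemma sum_bernoulliWeight_mul_sum [Fintype ι] (p : ι → ℝ) (s : Finset ι) (u v : Finset ι → ℝ)
    (hu : ∀ A ⊆ s, ∀ B ⊆ sᶜ, u (A ∪ B) = u A) (hv : ∀ A ⊆ s, ∀ B ⊆ sᶜ, v (A ∪ B) = v B) :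
    (∑ G ∈ univ.powerset, bernoulliWeight p univ G * u G) *
        ∑ G ∈ univ.powerset, bernoulliWeight p univ G * v G =
      ∑ G ∈ univ.powerset, bernoulliWeight p univ G * (u G * v G) := by
  have hd : Disjoint s sᶜ := disjoint_compl_right
  have hw : ∀ A ∈ s.powerset, ∀ B ∈ sᶜ.powerset, bernoulliWeight p (s ∪ sᶜ) (A ∪ B) =
      bernoulliWeight p s A * bernoulliWeight p sᶜ B := fun A hA B hB =>
    bernoulliWeight_union p hd (mem_powerset.mp hA) (mem_powerset.mp hB)
  rw [← union_compl s]
  simp only [sum_powerset_union hd]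
  calc _ = (∑ A ∈ s.powerset, bernoulliWeight p s A * u A) *
        ∑ B ∈ sᶜ.powerset, bernoulliWeight p sᶜ B * v B := by
        congr 1
        · refine sum_congr rfl fun A hA => ?_
          rw [← mul_one (_ * u A), ← sum_bernoulliWeight p sᶜ, mul_sum]
          refine sum_congr rfl fun B hB => ?_
          rw [hw A hA B hB, hu A (mem_powerset.mp hA) B (mem_powerset.mp hB)]
          ring
        · rw [sum_comm]
          refine sum_congr rfl fun B hB => ?_
          rw [← mul_one (_ * v B), ← sum_bernoulliWeight p s, mul_sum]
          refine sum_congr rfl fun A hA => ?_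
          rw [hw A hA B hB, hv A (mem_powerset.mp hA) B (mem_powerset.mp hB)]
          ring
    _ = _ := by
        rw [sum_mul_sum]
        refine sum_congr rfl fun A hA => sum_congr rfl fun B hB => ?_
        rw [hw A hA B hB, hu A (mem_powerset.mp hA) B (mem_powerset.mp hB),
          hv A (mem_powerset.mp hA) B (mem_powerset.mp hB)]
        ring

end Bernoulli

omit [∀ i, Fintype (X i)] [∀ i, DecidableEq (X i)] in
lemma pos_sum_smul {ι : Type*} {S : Finset ι} {c : ι → ℝ} {μ : ι → Meas X}
    (hc : ∀ j ∈ S, 0 ≤ c j) (hμ : ∀ j ∈ S, Pos X (μ j)) : Pos X (∑ j ∈ S, c j • μ j) :=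
  fun x => by
    rw [Finset.sum_apply]
    exact sum_nonneg fun j hj => mul_nonneg (hc j hj) (hμ j hj x)

omit [∀ i, DecidableEq (X i)] in
lemma mass_sum_smul {ι : Type*} (S : Finset ι) (c : ι → ℝ) (μ : ι → Meas X) :
    mass X (∑ j ∈ S, c j • μ j) = ∑ j ∈ S, c j * mass X (μ j) := by
  simp only [mass, Finset.sum_apply, Pi.smul_apply, smul_eq_mul, mul_sum]
  exact sum_comm

lemma recomb_sum_smul {ι : Type*} (S : Finset ι) {c : ι → ℝ} {μ : ι → Meas X} {m : ℝ}
    (hc : ∀ j ∈ S, 0 ≤ c j) (hc₁ : ∑ j ∈ S, c j = 1) (hμ : ∀ j ∈ S, Pos X (μ j))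
    (hm : ∀ j ∈ S, mass X (μ j) = m) (t : Finset (Fin (n + 1)))
    (hcorr : ∀ x, (∑ j ∈ S, c j * fiberMass t (μ j) x) * (∑ j ∈ S, c j * fiberMass tᶜ (μ j) x)
      = ∑ j ∈ S, c j * (fiberMass t (μ j) x * fiberMass tᶜ (μ j) x)) :
    recomb t (∑ j ∈ S, c j • μ j) = ∑ j ∈ S, c j • recomb t (μ j) := by
  have hmass : mass X (∑ j ∈ S, c j • μ j) = m := by
    rw [mass_sum_smul, sum_congr rfl fun j hj => by rw [hm j hj], ← sum_mul, hc₁,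
      one_mul]
  funext x
  rw [recomb_apply, tv_eq_mass_s16 (pos_sum_smul hc hμ), hmass, fiberMass_sum_smul,
    fiberMass_sum_smul, hcorr, Finset.sum_apply, mul_sum]
  refine sum_congr rfl fun j hj => ?_
  rw [Pi.smul_apply, smul_eq_mul, recomb_apply, tv_eq_mass_s16 (hμ j hj), hm j hj]
  ring

lemma coeffA_eq_bernoulliWeight (ρ : Fin n → ℝ) (G : Finset (Fin n)) (t : ℝ) :
    coeffA ρ G t = bernoulliWeight (fun β => 1 - Real.exp (-(ρ β * t))) univ G := by
  simp only [coeffA, bernoulliWeight, sub_sub_cancel, compl_eq_univ_sdiff]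

lemma sum_coeffA (ρ : Fin n → ℝ) (t : ℝ) :
    ∑ G ∈ (univ : Finset (Fin n)).powerset, coeffA ρ G t = 1 := by
  simp only [coeffA_eq_bernoulliWeight, sum_bernoulliWeight]

lemma coeffA_nonneg {ρ : Fin n → ℝ} (hρ : ∀ α, 0 < ρ α) {t : ℝ} (ht : 0 ≤ t)
    (G : Finset (Fin n)) : 0 ≤ coeffA ρ G t := by
  have hexp : ∀ β, Real.exp (-(ρ β * t)) ≤ 1 := fun β =>
    Real.exp_le_one_iff.mpr (neg_nonpos.mpr (mul_nonneg (hρ β).le ht))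
  exact mul_nonneg (prod_nonneg fun β _ => (Real.exp_pos _).le)
    (prod_nonneg fun β _ => sub_nonneg.mpr (hexp β))

lemma R_sum_coeffA_smul_RG {ρ : Fin n → ℝ} (hρ : ∀ α, 0 < ρ α) {t : ℝ} (ht : 0 ≤ t)
    {ν : Meas X} (hν : Pos X ν) (α : Fin n) (K : Finset (Fin n)) :
    R X α (∑ G ∈ (univ : Finset (Fin n)).powerset, coeffA ρ G t • RG X (G ∪ K) ν) =
      ∑ G ∈ (univ : Finset (Fin n)).powerset, coeffA ρ G t • R X α (RG X (G ∪ K) ν) := by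
  simp only [R_eq_recomb]
  refine recomb_sum_smul _ (fun G _ => coeffA_nonneg hρ ht G) (sum_coeffA ρ t)
    (fun G _ => RG_pos hν _) (fun G _ => mass_RG hν _) _ fun x => ?_
  simp only [coeffA_eq_bernoulliWeight]
  refine sum_bernoulliWeight_mul_sum _ ({β | β < α} : Finset (Fin n)) _ _ ?_ ?_
  · intro A _ B hB
    have hle : ∀ β ∈ B, Iic α.castSucc ⊆ Iic β.castSucc ∨
        Iic α.castSucc ⊆ (Iic β.castSucc)ᶜ := fun β hβ => by
      have : α ≤ β := by simpa using hB hβ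
      exact Or.inl (Iic_subset_Iic.mpr (Fin.castSucc_le_castSucc_iff.mpr this))
    rw [union_right_comm, union_comm _ B]
    exact congrFun (fiberMass_RG_union hν hle _) x
  · intro A hA B _
    have hlt : ∀ β ∈ A, (Iic α.castSucc)ᶜ ⊆ Iic β.castSucc ∨
        (Iic α.castSucc)ᶜ ⊆ (Iic β.castSucc)ᶜ := fun β hβ => by
      have : β ≤ α := (by simpa using hA hβ : β < α).le
      exact Or.inr (compl_subset_compl.mpr
        (Iic_subset_Iic.mpr (Fin.castSucc_le_castSucc_iff.mpr this)))
    rw [union_assoc]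
    exact congrFun (fiberMass_RG_union hν hlt _) x

end

/-- linear action on the solution simplex:
`R_H(∑_{G⊆L} a_G(t) R_G(ν)) = ∑_{G⊆L} a_G(t) R_{G∪H}(ν)` for every `H ⊆ L`. -/
theorem RG_linear_action (ρ : Fin n → ℝ) (hρ : ∀ α, 0 < ρ α)
    (ν : Meas X) (hν : Pos X ν) {t : ℝ} (ht : 0 ≤ t) (H : Finset (Fin n)) :
    RG X H (∑ G ∈ (Finset.univ : Finset (Fin n)).powerset, coeffA ρ G t • RG X G ν) =
      ∑ G ∈ (Finset.univ : Finset (Fin n)).powerset, coeffA ρ G t • RG X (G ∪ H) ν := by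
  have hpos : Pos X (∑ G ∈ (univ : Finset (Fin n)).powerset, coeffA ρ G t • RG X G ν) :=
    pos_sum_smul (fun G _ => coeffA_nonneg hρ ht G) (fun G _ => RG_pos hν G)
  induction H using Finset.induction_on with
  | empty => simp [RG]
  | insert α H _ ih =>
    rw [← R_RG hpos, ih, R_sum_coeffA_smul_RG hρ ht hν]
    refine sum_congr rfl fun G _ => ?_
    rw [R_RG hν, union_insert]

end Recombination
end

section
/- Defining the operators T_G(ν) := ∑_{H⊇G} (−1)^{|H∖G|} R_H(ν) on positive measures, the solution ω_t = ∑_{G⊆L} a_G(t) R_G(ω₀) can be rewritten as ω_t = ∑_{K⊆L} b_K(t) T_K(ω₀), where b_K(t) = exp(−t ∑_{α∈L∖K} ρ_α). -/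
open Finset

namespace Recombination

variable {n : ℕ} (X : Fin (n + 1) → Type*) [∀ i, Fintype (X i)] [∀ i, DecidableEq (X i)]

lemma coeffB_eq_prod (ρ : Fin n → ℝ) (K : Finset (Fin n)) (t : ℝ) :
    coeffB ρ K t = ∏ α ∈ Kᶜ, Real.exp (-(ρ α * t)) := by
  unfold coeffB
  rw [show (-(∑ α ∈ Kᶜ, ρ α) * t) = ∑ α ∈ Kᶜ, -(ρ α * t) by
    rw [neg_mul, Finset.sum_mul, ← Finset.sum_neg_distrib], Real.exp_sum]

lemma coeffA_eq_sum (ρ : Fin n → ℝ) (H : Finset (Fin n)) (t : ℝ) :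
    coeffA ρ H t = ∑ K ∈ H.powerset, (-1 : ℝ) ^ ((H \ K).card) * coeffB ρ K t := by
  set e : Fin n → ℝ := fun α => Real.exp (-(ρ α * t)) with he
  have hprod : ∏ β ∈ H, (1 - e β)
      = ∑ S ∈ H.powerset, (-1 : ℝ) ^ S.card * ∏ β ∈ S, e β := by
    have : ∀ β ∈ H, (1 - e β) = (fun β => -e β) β + (fun _ => (1 : ℝ)) β := by
      intro β _; simp [sub_eq_neg_add]
    rw [Finset.prod_congr rfl this, Finset.prod_add]
    refine Finset.sum_congr rfl fun S hS => ?_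
    rw [Finset.prod_const_one, mul_one,
      Finset.prod_congr rfl (fun i (_ : i ∈ S) => show -e i = (-1 : ℝ) * e i by ring),
      Finset.prod_mul_distrib, Finset.prod_const]
  unfold coeffA
  rw [hprod, Finset.mul_sum]
  rw [Finset.sum_nbij' (i := fun S => H \ S) (j := fun K => H \ K)]
  · intro S hS
    simp only [Finset.mem_powerset] at hS ⊢
    exact Finset.sdiff_subset
  · intro K hK
    simp only [Finset.mem_powerset] at hK ⊢
    exact Finset.sdiff_subset
  · intro S hS
    simp only [Finset.mem_powerset] at hS
    exact Finset.sdiff_sdiff_eq_self hS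
  · intro K hK
    simp only [Finset.mem_powerset] at hK
    exact Finset.sdiff_sdiff_eq_self hK
  · intro S hS
    simp only [Finset.mem_powerset] at hS
    have h1 : H \ (H \ S) = S := Finset.sdiff_sdiff_eq_self hS
    rw [h1, coeffB_eq_prod]
    have h2 : (H \ S)ᶜ = Hᶜ ∪ S := by
      ext α
      simp only [Finset.mem_compl, Finset.mem_sdiff, Finset.mem_union, not_and, not_not]
      constructor
      · intro h; by_cases hα : α ∈ H
        · exact Or.inr (h hα)
        · exact Or.inl hα
      · intro h hα
        rcases h with h | h
        · exact absurd hα h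
        · exact h
    rw [h2, Finset.prod_union (by
      rw [Finset.disjoint_left]
      intro a ha; simp only [Finset.mem_compl] at ha
      intro haS; exact ha (hS haS))]
    ring

/-- the solution `ω_t = ∑_{G⊆L} a_G(t) R_G(ω₀)` can be rewritten as
`ω_t = ∑_{K⊆L} b_K(t) T_K(ω₀)` with `T_G := ∑_{H⊇G} (−1)^{|H∖G|} R_H` and
`b_K(t) = exp(−t ∑_{α∈L∖K} ρ_α)`. -/
theorem sol_eq_sum_T (ρ : Fin n → ℝ) (hρ : ∀ α, 0 < ρ α)
    (ω₀ : Meas X) (h₀ : Pos X ω₀) {t : ℝ} (ht : 0 ≤ t) :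
    sol X ρ ω₀ t =
      ∑ K ∈ (Finset.univ : Finset (Fin n)).powerset, coeffB ρ K t • T X K ω₀ := by
  unfold sol T
  have : ∀ K : Finset (Fin n),
      coeffB ρ K t • ∑ H ∈ (Finset.univ : Finset (Fin n)).powerset.filter
          (fun H => K ⊆ H), ((-1 : ℝ) ^ (H \ K).card) • RG X H ω₀
      = ∑ H ∈ (Finset.univ : Finset (Fin n)).powerset,
          (if K ⊆ H then ((-1 : ℝ) ^ (H \ K).card * coeffB ρ K t) • RG X H ω₀
           else 0) := by
    intro K
    rw [Finset.smul_sum, ← Finset.sum_filter]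
    refine Finset.sum_congr rfl fun H hH => ?_
    rw [smul_smul, mul_comm]
  rw [Finset.sum_congr rfl fun K _ => this K, Finset.sum_comm]
  refine Finset.sum_congr rfl fun H hH => ?_
  have hp : (Finset.univ : Finset (Fin n)).powerset.filter (fun K => K ⊆ H)
      = H.powerset := by
    ext K; simp
  rw [← Finset.sum_filter, hp, ← Finset.sum_smul, coeffA_eq_sum]

end Recombination
end

section
/- Convergence to the product measure: if all ρ_α > 0 and ω₀ is a probability measure on the finite product space X, then the solution ω_t = ∑_{G⊆L} a_G(t) R_G(ω₀) converges in total variation norm, as t → ∞, to the complete product measure R_L(ω₀) = ⊗_{i=0}^{n} (π_i.ω₀) of the one-site marginals of ω₀. -/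
open Finset

namespace Recombination

variable {n : ℕ} (X : Fin (n + 1) → Type*) [∀ i, Fintype (X i)] [∀ i, DecidableEq (X i)]

/-! For a probability measure `ω`, the recombinator `R_α ω` is the product of the marginals of `ω`
on the sites `≤ α` and `> α`. Let `ν_k = decouple X (· ≤ k) ω` keep the joint law of `ω` on the
sites `≤ k` and make each later site independent with its own one-site marginal. `ν_{k+1}` is a
probability measure whose marginal on the sites `≤ k` is that of `ω` and whose marginal on the
sites `> k` is the product of the one-site marginals, so `R_k ν_{k+1} = ν_k`; running from
`ν_n = ω` down to `ν_0` gives `R_L ω = ⊗ᵢ πᵢ.ω`. Convergence is then immediate, since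
`ω_t = ∑_G a_G(t) R_G ω₀` is a fixed finite combination and `a_G(t) → [G = L]`. -/

open Filter Topology

/-- `marg X p ω` read on the full space (see `marg_apply_restrict`), which avoids
subtype-indexed configurations. -/
noncomputable def margAt (p : Fin (n + 1) → Prop) [DecidablePred p] (ω : Meas X) : Meas X :=
  fun x => ∑ x' : ∀ i, X i, if ∀ i, p i → x' i = x i then ω x' else 0

section Development

variable {X}

theorem sum_pinned_prod (p : Fin (n + 1) → Prop) [DecidablePred p] (x₀ : ∀ i, X i)
    (g : ∀ i, X i → ℝ) :
    (∑ x : ∀ i, X i, if ∀ i, p i → x i = x₀ i then ∏ i with ¬ p i, g i (x i) else 0) =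
      ∏ i with ¬ p i, ∑ a, g i a := by
  let t : ∀ i, Finset (X i) := fun i => if p i then {x₀ i} else univ
  have hpin : univ.filter (fun x : ∀ i, X i => ∀ i, p i → x i = x₀ i) = Fintype.piFinset t := by
    ext x
    simp only [mem_filter, mem_univ, true_and, Fintype.mem_piFinset, t]
    refine forall_congr' fun i => ?_
    split_ifs with hi <;> simp [hi]
  rw [← sum_filter, hpin, prod_filter]
  simp_rw [prod_filter]
  rw [← prod_univ_sum t fun i a => if ¬ p i then g i a else 1]
  refine prod_congr rfl fun i _ => ?_
  by_cases hi : p i <;> simp [hi, t]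

theorem margAt_mul_prod_of_imp {p q : Fin (n + 1) → Prop} [DecidablePred p] [DecidablePred q]
    (hpq : ∀ i, p i → q i) (ω : Meas X) (g : ∀ i, X i → ℝ) (x : ∀ i, X i) :
    margAt X p (fun y => margAt X q ω y * ∏ i with ¬ q i, g i (y i)) x =
      margAt X p ω x * ∏ i with ¬ q i, ∑ a, g i a := by
  have hcond : ∀ x' x'' : ∀ i, X i,
      ((∀ i, p i → x' i = x i) ∧ ∀ i, q i → x'' i = x' i) ↔
        ((∀ i, p i → x'' i = x i) ∧ ∀ i, q i → x' i = x'' i) := fun x' x'' =>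
    ⟨fun ⟨h₁, h₂⟩ => ⟨fun i hi => (h₂ i (hpq i hi)).trans (h₁ i hi), fun i hi => (h₂ i hi).symm⟩,
     fun ⟨h₁, h₂⟩ => ⟨fun i hi => (h₂ i (hpq i hi)).trans (h₁ i hi), fun i hi => (h₂ i hi).symm⟩⟩
  calc margAt X p (fun y => margAt X q ω y * ∏ i with ¬ q i, g i (y i)) x
      = ∑ x' : ∀ i, X i, ∑ x'' : ∀ i, X i,
          if (∀ i, p i → x' i = x i) ∧ ∀ i, q i → x'' i = x' i then
            ω x'' * ∏ i with ¬ q i, g i (x' i) else 0 := by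
        refine sum_congr rfl fun x' _ => ?_
        by_cases hx' : ∀ i, p i → x' i = x i
        · simp only [margAt, ite_and, if_pos hx', sum_mul, ite_mul, zero_mul]
        · simp only [ite_and, if_neg hx', sum_const_zero]
    _ = ∑ x'' : ∀ i, X i, ∑ x' : ∀ i, X i,
          if (∀ i, p i → x'' i = x i) ∧ ∀ i, q i → x' i = x'' i then
            ω x'' * ∏ i with ¬ q i, g i (x' i) else 0 := by
        rw [sum_comm]
        simp only [hcond]
    _ = ∑ x'' : ∀ i, X i,
          (if ∀ i, p i → x'' i = x i then ω x'' else 0) * ∏ i with ¬ q i, ∑ a, g i a := by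
        refine sum_congr rfl fun x'' _ => ?_
        by_cases hx'' : ∀ i, p i → x'' i = x i
        · simp only [ite_and, if_pos hx'', ← sum_pinned_prod q x'' g, mul_sum, mul_ite, mul_zero]
        · simp only [ite_and, if_neg hx'', sum_const_zero, zero_mul]
    _ = margAt X p ω x * ∏ i with ¬ q i, ∑ a, g i a := (sum_mul ..).symm

theorem margAt_margAt_of_cover {p q : Fin (n + 1) → Prop} [DecidablePred p] [DecidablePred q]
    (hpq : ∀ i, p i ∨ q i) (ω : Meas X) (x : ∀ i, X i) :
    margAt X p (margAt X q ω) x = margAt X (fun i => p i ∧ q i) ω x := by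
  have hglue : ∀ x' x'' : ∀ i, X i,
      ((∀ i, p i → x' i = x i) ∧ ∀ i, q i → x'' i = x' i) ↔
        (x' = (fun i => if q i then x'' i else x i) ∧ ∀ i, p i ∧ q i → x'' i = x i) := by
    intro x' x''
    constructor
    · rintro ⟨hp, hq⟩
      refine ⟨funext fun i => ?_, fun i ⟨hpi, hqi⟩ => (hq i hqi).trans (hp i hpi)⟩
      by_cases hqi : q i
      · simp only [if_pos hqi, hq i hqi]
      · simp only [if_neg hqi, hp i ((hpq i).resolve_right hqi)]
    · rintro ⟨rfl, h⟩
      refine ⟨fun i hpi => ?_, fun i hqi => by simp only [if_pos hqi]⟩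
      by_cases hqi : q i
      · simp only [if_pos hqi, h i ⟨hpi, hqi⟩]
      · simp only [if_neg hqi]
  calc margAt X p (margAt X q ω) x
      = ∑ x' : ∀ i, X i, ∑ x'' : ∀ i, X i,
          if (∀ i, p i → x' i = x i) ∧ ∀ i, q i → x'' i = x' i then ω x'' else 0 := by
        refine sum_congr rfl fun x' _ => ?_
        by_cases hx' : ∀ i, p i → x' i = x i
        · simp only [margAt, ite_and, if_pos hx']
        · simp only [ite_and, if_neg hx', sum_const_zero]
    _ = ∑ x'' : ∀ i, X i, if ∀ i, p i ∧ q i → x'' i = x i then ω x'' else 0 := by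
        rw [sum_comm]
        refine sum_congr rfl fun x'' _ => ?_
        simp only [hglue, ite_and, sum_ite_eq', mem_univ, if_true]

theorem margAt_mul_prod_of_cover {p q : Fin (n + 1) → Prop} [DecidablePred p] [DecidablePred q]
    (hpq : ∀ i, p i ∨ q i) (ω : Meas X) (g : ∀ i, X i → ℝ) (x : ∀ i, X i) :
    margAt X p (fun y => margAt X q ω y * ∏ i with ¬ q i, g i (y i)) x =
      margAt X (fun i => p i ∧ q i) ω x * ∏ i with ¬ q i, g i (x i) := by
  have hprod : ∀ x' : ∀ i, X i, (∀ i, p i → x' i = x i) →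
      ∏ i with ¬ q i, g i (x' i) = ∏ i with ¬ q i, g i (x i) := fun x' hx' =>
    prod_congr rfl fun i hi => by rw [hx' i ((hpq i).resolve_right (mem_filter.mp hi).2)]
  rw [← margAt_margAt_of_cover hpq, margAt, margAt, sum_mul]
  refine sum_congr rfl fun x' _ => ?_
  by_cases hx' : ∀ i, p i → x' i = x i
  · rw [if_pos hx', if_pos hx', hprod x' hx']
  · rw [if_neg hx', if_neg hx', zero_mul]

theorem margAt_of_forall {p : Fin (n + 1) → Prop} [DecidablePred p] (hp : ∀ i, p i)
    (ω : Meas X) (x : ∀ i, X i) : margAt X p ω x = ω x := by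
  have hx : ∀ x' : ∀ i, X i, (∀ i, p i → x' i = x i) ↔ x' = x :=
    fun x' => ⟨fun h => funext fun i => h i (hp i), fun h i _ => h ▸ rfl⟩
  simp only [margAt, hx, sum_ite_eq', mem_univ, if_true]

theorem margAt_false (ω : Meas X) (x : ∀ i, X i) :
    margAt X (fun _ => False) ω x = mass X ω := by
  simp only [margAt, false_imp_iff, imp_true_iff, if_true, mass]

theorem margAt_eq_marg1 {p : Fin (n + 1) → Prop} [DecidablePred p] {j : Fin (n + 1)}
    (hp : ∀ i, p i ↔ i = j) (ω : Meas X) (x : ∀ i, X i) :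
    margAt X p ω x = marg1 X j ω (x j) := by
  have hx : ∀ x' : ∀ i, X i, (∀ i, p i → x' i = x i) ↔ x' j = x j :=
    fun x' => ⟨fun h => h j ((hp j).2 rfl), fun h i hi => ((hp i).1 hi) ▸ h⟩
  simp only [margAt, hx, marg1]

theorem sum_marg1 (i : Fin (n + 1)) (ω : Meas X) : ∑ a, marg1 X i ω a = mass X ω := by
  unfold marg1
  rw [sum_comm]
  simp only [sum_ite_eq, mem_univ, if_true, mass]

theorem marg_apply_restrict (p : Fin (n + 1) → Prop) [DecidablePred p] (ω : Meas X)
    (x : ∀ i, X i) : marg X p ω (fun i => x i.1) = margAt X p ω x := by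
  simp only [marg, margAt, Subtype.forall]

theorem R_of_prob {ω : Meas X} (h : Pos X ω) (hm : mass X ω = 1) (α : Fin n) :
    R X α ω = fun x =>
      margAt X (fun i => i.val ≤ α.val) ω x * margAt X (fun i => ¬ i.val ≤ α.val) ω x := by
  have hω : ω ≠ 0 := by
    rintro rfl
    simp [mass] at hm
  have htv : tv X ω = mass X ω := sum_congr rfl fun x _ => abs_of_nonneg (h x)
  rw [R, if_neg hω, htv, hm, inv_one, one_smul]
  funext x
  simp only [prodM, marg_apply_restrict]

theorem filter_not_le_eq_insert {k : ℕ} (hk : k < n) :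
    univ.filter (fun i : Fin (n + 1) => ¬ i.val ≤ k) =
      insert ⟨k + 1, by omega⟩ (univ.filter fun i : Fin (n + 1) => ¬ i.val ≤ k + 1) := by
  ext i
  simp only [mem_insert, mem_filter, mem_univ, true_and, Fin.ext_iff]
  omega

variable (X) in
noncomputable def decouple (q : Fin (n + 1) → Prop) [DecidablePred q] (ω : Meas X) : Meas X :=
  fun x => margAt X q ω x * ∏ i with ¬ q i, marg1 X i ω (x i)

section Decouple

variable {ω : Meas X} {q : Fin (n + 1) → Prop} [DecidablePred q]

theorem pos_decouple (h : Pos X ω) : Pos X (decouple X q ω) := by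
  have hterm : ∀ (P : Prop) [Decidable P] (x' : ∀ i, X i), 0 ≤ if P then ω x' else 0 :=
    fun _ _ x' => by split_ifs <;> simp [h x']
  exact fun x => mul_nonneg (sum_nonneg fun x' _ => hterm _ x')
    (prod_nonneg fun i _ => sum_nonneg fun x' _ => hterm _ x')

theorem mass_decouple (hm : mass X ω = 1) : mass X (decouple X q ω) = 1 := by
  obtain ⟨x, -⟩ : (univ : Finset (∀ i, X i)).Nonempty :=
    nonempty_of_sum_ne_zero (hm.trans_ne one_ne_zero)
  rw [← margAt_false _ x]
  unfold decouple
  rw [margAt_mul_prod_of_imp (fun _ => False.elim)]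
  simp only [margAt_false, sum_marg1, hm, prod_const_one, mul_one]

theorem R_decouple_succ (h : Pos X ω) (hm : mass X ω = 1) {k : ℕ} (hk : k < n) :
    R X ⟨k, hk⟩ (decouple X (fun i => i.val ≤ k + 1) ω) = decouple X (fun i => i.val ≤ k) ω := by
  rw [R_of_prob (pos_decouple h) (mass_decouple hm)]
  funext x
  have hle : margAt X (fun i => i.val ≤ k) (decouple X (fun i => i.val ≤ k + 1) ω) x =
      margAt X (fun i => i.val ≤ k) ω x := by
    unfold decouple
    rw [margAt_mul_prod_of_imp (fun i (hi : i.val ≤ k) => by omega)]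
    simp only [sum_marg1, hm, prod_const_one, mul_one]
  have hgt : margAt X (fun i => ¬ i.val ≤ k) (decouple X (fun i => i.val ≤ k + 1) ω) x =
      ∏ i with ¬ i.val ≤ k, marg1 X i ω (x i) := by
    unfold decouple
    rw [margAt_mul_prod_of_cover (fun i => by omega),
      margAt_eq_marg1 (j := ⟨k + 1, by omega⟩)
        (fun i => by rw [Fin.ext_iff]; dsimp only; omega),
      filter_not_le_eq_insert hk, prod_insert (by simp)]
  rw [hle, hgt, decouple]

theorem decouple_le_last : decouple X (fun i => i.val ≤ n) ω = ω := by
  funext x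
  rw [decouple, margAt_of_forall Fin.is_le,
    prod_eq_one fun i hi => absurd (Fin.is_le i) (mem_filter.1 hi).2, mul_one]

theorem decouple_le_zero :
    decouple X (fun i => i.val ≤ 0) ω = fun x => ∏ i, marg1 X i ω (x i) := by
  funext x
  rw [decouple, margAt_eq_marg1 (j := 0) (fun i => by rw [Fin.ext_iff]; simp),
    prod_filter, Fin.prod_univ_succ, Fin.prod_univ_succ]
  simp

theorem foldr_R_drop_finRange (h : Pos X ω) (hm : mass X ω = 1) {k : ℕ} (hk : k ≤ n) :
    ((List.finRange n).drop k).foldr (R X) ω = decouple X (fun i => i.val ≤ k) ω := by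
  induction hk using Nat.decreasingInduction with
  | self => rw [List.drop_of_length_le (by simp), List.foldr_nil, decouple_le_last]
  | of_succ k hk ih =>
    rw [List.drop_eq_getElem_cons (by simpa using hk), List.foldr_cons, ih]
    simpa using R_decouple_succ h hm hk

theorem RG_univ_of_prob (h : Pos X ω) (hm : mass X ω = 1) :
    RG X univ ω = fun x => ∏ i, marg1 X i ω (x i) := by
  rw [RG, Fin.sort_univ, ← decouple_le_zero, ← foldr_R_drop_finRange h hm (Nat.zero_le n),
    List.drop_zero]

end Decouple

theorem tendsto_coeffA {ρ : Fin n → ℝ} (hρ : ∀ α, 0 < ρ α) (G : Finset (Fin n)) :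
    Tendsto (coeffA ρ G) atTop (𝓝 (if G = univ then 1 else 0)) := by
  have hexp : ∀ α, Tendsto (fun t => Real.exp (-(ρ α * t))) atTop (𝓝 0) := fun α =>
    Real.tendsto_exp_neg_atTop_nhds_zero.comp (tendsto_id.const_mul_atTop (hρ α))
  have hlim := (tendsto_finsetProd Gᶜ fun α _ => hexp α).mul
    (tendsto_finsetProd G fun α _ => (hexp α).const_sub 1)
  have hval : (∏ _ ∈ Gᶜ, (0 : ℝ)) * ∏ _ ∈ G, (1 - (0 : ℝ)) = if G = univ then 1 else 0 := by
    by_cases hG : G = univ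
    · simp [hG]
    · obtain ⟨α, hα⟩ := not_forall.1 (mt eq_univ_iff_forall.2 hG)
      rw [if_neg hG, prod_eq_zero (mem_compl.2 hα) rfl, zero_mul]
  exact hval ▸ hlim

theorem tendsto_sol {ρ : Fin n → ℝ} (hρ : ∀ α, 0 < ρ α) (ω₀ : Meas X) :
    Tendsto (sol X ρ ω₀) atTop (𝓝 (RG X univ ω₀)) := by
  have hlim := tendsto_finsetSum (univ : Finset (Fin n)).powerset fun G _ =>
    (tendsto_coeffA hρ G).smul_const (RG X G ω₀)
  have hval :
      ∑ G ∈ univ.powerset, (if G = univ then (1 : ℝ) else 0) • RG X G ω₀ = RG X univ ω₀ := by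
    simp
  exact hval ▸ hlim

end Development

/-- convergence to the product measure: if all `ρ_α > 0` and `ω₀` is
a probability measure, the solution `ω_t = ∑_{G⊆L} a_G(t) R_G(ω₀)` converges in
total variation norm, as `t → ∞`, to the complete product measure
`R_L(ω₀) = ⊗ᵢ (πᵢ.ω₀)` of the one-site marginals of `ω₀`. -/
theorem sol_tendsto_product (ρ : Fin n → ℝ) (hρ : ∀ α, 0 < ρ α)
    (ω₀ : Meas X) (h₀ : Pos X ω₀) (hm : mass X ω₀ = 1) :
    RG X Finset.univ ω₀ = (fun x => ∏ i, marg1 X i ω₀ (x i)) ∧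
    Filter.Tendsto (fun t => tv X (sol X ρ ω₀ t - RG X Finset.univ ω₀))
      Filter.atTop (nhds 0) := by
  refine ⟨RG_univ_of_prob h₀ hm, ?_⟩
  have hcont : Continuous (tv X) := continuous_finsetSum _ fun x _ => (continuous_apply x).abs
  have htv : tv X 0 = 0 := by simp [tv]
  exact htv ▸ (hcont.tendsto 0).comp (tendsto_sub_nhds_zero_iff.2 (tendsto_sol hρ ω₀))

end Recombination
end
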